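/- For finitely supported functions λ, μ : I → ℂ, the H_I-modules M(1,λ) and M(1,μ) (defined via p_i = ∂/∂x_i, q_i = x_i, k = 1 on e^{λx}ℂ[x_i] and e^{μx}ℂ[x_i] respectively) are isomorphic if and only if λ = μ. -/

import Mathlib

/-- A level-one module for the Heisenberg Lie algebra `H_I` with basis
`{p_i, q_i, k | i ∈ I}`, relations `[p_i, q_j] = δ_{ij} k`, all other brackets zero,
where the central element `k` acts as the identity. -/
structure HeisenbergRep (I : Type) (W : Type) [AddCommGroup W] [Module ℂ W] where
  p : I → Module.End ℂ W
  q : I → Module.End ℂ W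
  comm_pp : ∀ i j, Commute (p i) (p j)
  comm_qq : ∀ i j, Commute (q i) (q j)
  comm_pq_same : ∀ i, p i * q i - q i * p i = 1
  comm_pq_ne : ∀ i j, i ≠ j → Commute (p i) (q j)

namespace HeisenbergRep

variable {I : Type} {W : Type} [AddCommGroup W] [Module ℂ W]

/-- A submodule stable under all the Heisenberg operators. -/
def Stable (ρ : HeisenbergRep I W) (S : Submodule ℂ W) : Prop :=
  (∀ i, ∀ w ∈ S, ρ.p i w ∈ S) ∧ (∀ i, ∀ w ∈ S, ρ.q i w ∈ S)

/-- `S` is a nonzero stable submodule with no proper nonzero stable submodule. -/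
def IsSimpleSub (ρ : HeisenbergRep I W) (S : Submodule ℂ W) : Prop :=
  ρ.Stable S ∧ S ≠ ⊥ ∧ ∀ T : Submodule ℂ W, ρ.Stable T → T ≤ S → T = ⊥ ∨ T = S

/-- Irreducibility of the representation. -/
def IsIrreducible (ρ : HeisenbergRep I W) : Prop := ρ.IsSimpleSub ⊤

/-- Restricted: for each vector `w`, `p_i w = 0` for all but finitely many `i`. -/
def Restricted (ρ : HeisenbergRep I W) : Prop :=
  ∀ w : W, {i : I | ρ.p i w ≠ 0}.Finite

/-- Isomorphism of Heisenberg representations. -/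
def Iso {W' : Type} [AddCommGroup W'] [Module ℂ W']
    (ρ : HeisenbergRep I W) (ρ' : HeisenbergRep I W') : Prop :=
  ∃ e : W ≃ₗ[ℂ] W', (∀ i w, e (ρ.p i w) = ρ'.p i (e w)) ∧
    (∀ i w, e (ρ.q i w) = ρ'.q i (e w))

end HeisenbergRep

/-- An endomorphism is locally finite if every vector lies in a
finitely generated (equivalently, finite-dimensional) stable subspace. -/
def Module.End.LocallyFinite {W : Type} [AddCommGroup W] [Module ℂ W]
    (T : Module.End ℂ W) : Prop :=
  ∀ w : W, ∃ S : Submodule ℂ W, w ∈ S ∧ S.FG ∧ ∀ v ∈ S, T v ∈ S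

/-- An endomorphism is locally nilpotent if every vector is killed by some power. -/
def Module.End.LocallyNilpotent {W : Type} [AddCommGroup W] [Module ℂ W]
    (T : Module.End ℂ W) : Prop :=
  ∀ w : W, ∃ n : ℕ, (T ^ n) w = 0

/-- The category `F`: restricted level-one modules on which every `p_i` is locally finite. -/
def HeisenbergRep.InCategoryF {I W : Type} [AddCommGroup W] [Module ℂ W]
    (ρ : HeisenbergRep I W) : Prop :=
  ρ.Restricted ∧ ∀ i, (ρ.p i).LocallyFinite

section M1

open MvPolynomial

variable {I : Type}

lemma pderiv_comm' [DecidableEq I] (i j : I) (f : MvPolynomial I ℂ) :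
    pderiv i (pderiv j f) = pderiv j (pderiv i f) := by
  induction f using MvPolynomial.induction_on' with
  | monomial s a =>
      simp only [pderiv_monomial]
      by_cases hij : i = j
      · subst hij; rfl
      · have h1 : ((s - Finsupp.single j 1 : I →₀ ℕ)) i = s i := by
          rw [Finsupp.tsub_apply, Finsupp.single_eq_of_ne hij, tsub_zero]
        have h2 : ((s - Finsupp.single i 1 : I →₀ ℕ)) j = s j := by
          rw [Finsupp.tsub_apply, Finsupp.single_eq_of_ne (Ne.symm hij), tsub_zero]
        rw [h1, h2, tsub_tsub, tsub_tsub, add_comm (Finsupp.single j 1)]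
        ring_nf
  | add p q hp hq => simp [hp, hq]

/-- The module `M(1,λ) = e^{λx} ℂ[x_i | i ∈ I]`, modelled on the polynomial ring
(`e^{λx} f ↔ f`), with `p_i = ∂/∂x_i` (which becomes `∂/∂x_i + λ_i` on the polynomial
part), `q_i` multiplication by `x_i`, and `k = 1`. -/
noncomputable def M1rep [DecidableEq I] (lam : I →₀ ℂ) :
    HeisenbergRep I (MvPolynomial I ℂ) where
  p i := (pderiv i).toLinearMap + lam i • (1 : Module.End ℂ (MvPolynomial I ℂ))
  q i := LinearMap.mulLeft ℂ (X i)
  comm_pp i j := by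
    apply LinearMap.ext; intro f
    simp [Module.End.mul_apply, pderiv_comm' i j, smul_eq_C_mul]
    ring
  comm_qq i j := by
    apply LinearMap.ext; intro f
    simp [Module.End.mul_apply]
    ring
  comm_pq_same i := by
    apply LinearMap.ext; intro f
    simp [Module.End.mul_apply, pderiv_mul, smul_eq_C_mul]
    ring
  comm_pq_ne i j hij := by
    apply LinearMap.ext; intro f
    simp [Module.End.mul_apply, pderiv_mul, pderiv_X_of_ne (Ne.symm hij), smul_eq_C_mul]
    ring

end M1

/-! An isomorphism intertwines the operators `p_i`, so it preserves their eigenvalues. On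
`M(1,λ)` the vector `e^{λx}` is an eigenvector of `p_i` with eigenvalue `λ_i`, and there is no
other eigenvalue: an eigenvector for `λ_i + c` with `c ≠ 0` is a nonzero polynomial `f` with
`∂f/∂x_i = c f`, and comparing coefficients at a monomial of `f` of maximal degree in `x_i`, where
the left side vanishes, shows that this is impossible. -/

theorem Module.End.HasEigenvalue.of_linearEquiv_comp {R M N : Type*} [CommRing R]
    [AddCommGroup M] [Module R M] [AddCommGroup N] [Module R N]
    {f : Module.End R M} {g : Module.End R N} (e : M ≃ₗ[R] N) (he : ∀ v, e (f v) = g (e v))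
    {c : R} (hc : f.HasEigenvalue c) : g.HasEigenvalue c := by
  obtain ⟨v, hv⟩ := hc.exists_hasEigenvector
  refine hasEigenvalue_of_hasEigenvector (x := e v) ⟨?_, by simpa using hv.2⟩
  rw [mem_eigenspace_iff, ← he, mem_eigenspace_iff.1 hv.1, map_smul]

theorem HeisenbergRep.Iso.hasEigenvalue_p {I W W' : Type} [AddCommGroup W] [Module ℂ W]
    [AddCommGroup W'] [Module ℂ W'] {ρ : HeisenbergRep I W} {ρ' : HeisenbergRep I W'}
    (h : ρ.Iso ρ') {i : I} {c : ℂ} (hc : (ρ.p i).HasEigenvalue c) : (ρ'.p i).HasEigenvalue c :=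
  let ⟨e, he, _⟩ := h
  hc.of_linearEquiv_comp e (he i)

namespace MvPolynomial

theorem eq_zero_of_pderiv_eq_smul {σ R : Type*} [CommSemiring R] [NoZeroDivisors R]
    {i : σ} {c : R} (hc : c ≠ 0) {f : MvPolynomial σ R} (h : pderiv i f = c • f) : f = 0 := by
  by_contra hf
  obtain ⟨m, hm, hmax⟩ := f.support.exists_max_image (· i) (support_nonempty.2 hf)
  have hnext : coeff (m + Finsupp.single i 1) f = 0 := by
    by_contra hne
    have := hmax _ (mem_support_iff.2 hne)
    simp at this
  have hcoeff := congr_arg (coeff m) h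
  rw [coeff_pderiv, hnext, zero_mul, coeff_smul, smul_eq_mul, eq_comm] at hcoeff
  exact mem_support_iff.1 hm ((mul_eq_zero.1 hcoeff).resolve_left hc)

end MvPolynomial

section M1

open MvPolynomial

variable {I : Type} [DecidableEq I]

theorem M1rep_p_apply (lam : I →₀ ℂ) (i : I) (f : MvPolynomial I ℂ) :
    (M1rep lam).p i f = pderiv i f + lam i • f := by
  simp [M1rep]

theorem M1rep_hasEigenvalue_p_iff (lam : I →₀ ℂ) (i : I) (c : ℂ) :
    ((M1rep lam).p i).HasEigenvalue c ↔ c = lam i := by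
  constructor
  · intro hc
    obtain ⟨f, hf, hf0⟩ := hc.exists_hasEigenvector
    rw [Module.End.mem_eigenspace_iff, M1rep_p_apply, ← eq_sub_iff_add_eq, ← sub_smul] at hf
    by_contra hne
    exact hf0 (eq_zero_of_pderiv_eq_smul (sub_ne_zero.2 hne) hf)
  · rintro rfl
    refine Module.End.hasEigenvalue_of_hasEigenvector (x := 1) ⟨?_, one_ne_zero⟩
    rw [Module.End.mem_eigenspace_iff, M1rep_p_apply, pderiv_one, zero_add]

end M1

theorem M1rep_iso_iff_general {I : Type} [DecidableEq I] (lam mu : I →₀ ℂ) :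
    (M1rep lam).Iso (M1rep mu) ↔ lam = mu := by
  constructor
  · intro h
    ext i
    exact (M1rep_hasEigenvalue_p_iff mu i _).1
      (h.hasEigenvalue_p ((M1rep_hasEigenvalue_p_iff lam i _).2 rfl))
  · rintro rfl
    exact ⟨LinearEquiv.refl ℂ _, fun _ _ => rfl, fun _ _ => rfl⟩

/-- The `H_I`-modules `M(1,λ)` and `M(1,μ)` are isomorphic iff `λ = μ`. -/
theorem M1rep_iso_iff {I : Type} [Nonempty I] [DecidableEq I] (lam mu : I →₀ ℂ) :
    (M1rep lam).Iso (M1rep mu) ↔ lam = mu :=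
  M1rep_iso_iff_general lam mu
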